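/- Let A be a finite dimensional algebra over a field k. Then the functor A ⊗ - : Alg_k → Alg_k (sending an algebra C to A ⊗ C) has a left adjoint. -/

import Mathlib

open CategoryTheory CategoryTheory.Limits MonoidalCategory TensorProduct Module

set_option linter.unusedSectionVars false

noncomputable section Sweedler

variable (k : Type) [Field k] (A : Type) [Ring A] [Algebra k A] [FiniteDimensional k A]
variable (B : Type) [Ring B] [Algebra k B]

namespace SweedlerAux

/-- basis of `A` -/
abbrev bA : Basis (Basis.ofVectorSpaceIndex k A) k A := Basis.ofVectorSpace k A

/-- free algebra on generators `(i, b)` -/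
abbrev F : Type := FreeAlgebra k (Basis.ofVectorSpaceIndex k A × B)

/-- relations making `b ↦ ∑ i, e i ⊗ [i,b]` an algebra map -/
inductive Rel : F k A B → F k A B → Prop
  | add (i) (x y : B) :
      Rel (FreeAlgebra.ι k (i, x + y)) (FreeAlgebra.ι k (i, x) + FreeAlgebra.ι k (i, y))
  | smul (i) (c : k) (x : B) :
      Rel (FreeAlgebra.ι k (i, c • x)) (c • FreeAlgebra.ι k (i, x))
  | one (i) :
      Rel (FreeAlgebra.ι k (i, (1 : B))) (algebraMap k (F k A B) ((bA k A).coord i 1))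
  | mul (i) (x y : B) :
      Rel (FreeAlgebra.ι k (i, x * y))
        (∑ j, ∑ l, (bA k A).coord i (bA k A j * bA k A l) •
          (FreeAlgebra.ι k (j, x) * FreeAlgebra.ι k (l, y)))

/-- the Sweedler-type algebra -/
abbrev L : Type := RingQuot (Rel k A B)

/-- generators of `L` -/
def X (p : Basis.ofVectorSpaceIndex k A × B) : L k A B :=
  RingQuot.mkAlgHom k (Rel k A B) (FreeAlgebra.ι k p)

/-- `X` is linear in the second variable -/
def xLin (i : Basis.ofVectorSpaceIndex k A) : B →ₗ[k] L k A B where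
  toFun x := X k A B (i, x)
  map_add' x y := by
    have := RingQuot.mkAlgHom_rel k (Rel.add i x y)
    simpa [X] using this
  map_smul' c x := by
    have := RingQuot.mkAlgHom_rel k (Rel.smul i c x)
    simpa [X] using this

lemma X_one (i) : X k A B (i, 1) = algebraMap k (L k A B) ((bA k A).coord i 1) := by
  have := RingQuot.mkAlgHom_rel k (Rel.one (k := k) (A := A) (B := B) i)
  simpa [X] using this

lemma X_mul (i) (x y : B) :
    X k A B (i, x * y) = ∑ j, ∑ l, (bA k A).coord i (bA k A j * bA k A l) •
      (X k A B (j, x) * X k A B (l, y)) := by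
  have := RingQuot.mkAlgHom_rel k (Rel.mul (k := k) (A := A) i x y)
  simpa [X] using this

/-- the candidate unit, as a linear map -/
def f₀ : B →ₗ[k] A ⊗[k] L k A B :=
  ∑ i, (TensorProduct.mk k A (L k A B) (bA k A i)).comp (xLin k A B i)

lemma f₀_apply (x : B) : f₀ k A B x = ∑ i, bA k A i ⊗ₜ[k] X k A B (i, x) := by
  simp [f₀, xLin]

variable (C : Type) [Ring C] [Algebra k C]

/-- coordinate projections of `A ⊗ C` -/
def proj (i : Basis.ofVectorSpaceIndex k A) : A ⊗[k] C →ₗ[k] C :=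
  TensorProduct.lift ((LinearMap.lsmul k C).comp ((bA k A).coord i))

@[simp] lemma proj_tmul (i) (a : A) (x : C) :
    proj k A C i (a ⊗ₜ x) = (bA k A).coord i a • x := rfl

lemma expand (t : A ⊗[k] C) : ∑ i, bA k A i ⊗ₜ[k] proj k A C i t = t := by
  induction t with
  | zero => simp
  | tmul a x =>
      simp only [proj_tmul]
      calc ∑ i, bA k A i ⊗ₜ[k] ((bA k A).coord i a • x)
          = ∑ i, ((bA k A).coord i a • bA k A i) ⊗ₜ[k] x := by
            simp [TensorProduct.smul_tmul]
        _ = a ⊗ₜ[k] x := by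
            rw [← TensorProduct.sum_tmul]
            congr 1
            exact (bA k A).sum_repr a
  | add u v hu hv => simp only [map_add, tmul_add, Finset.sum_add_distrib, hu, hv]

/-- the candidate unit as an algebra map -/
def fAlg : B →ₐ[k] A ⊗[k] L k A B :=
  AlgHom.ofLinearMap (f₀ k A B)
    (by
      rw [f₀_apply]
      simp only [X_one]
      rw [Algebra.TensorProduct.one_def]
      calc ∑ i, bA k A i ⊗ₜ[k] algebraMap k (L k A B) ((bA k A).coord i 1)
          = ∑ i, ((bA k A).coord i (1 : A) • bA k A i) ⊗ₜ[k] (1 : L k A B) := by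
            refine Finset.sum_congr rfl fun i _ => ?_
            rw [Algebra.algebraMap_eq_smul_one, TensorProduct.smul_tmul]
        _ = (1 : A) ⊗ₜ[k] (1 : L k A B) := by
            rw [← TensorProduct.sum_tmul]
            congr 1
            exact (bA k A).sum_repr 1)
    (by
      intro x y
      rw [f₀_apply, f₀_apply, f₀_apply]
      simp only [X_mul]
      rw [Finset.sum_mul_sum]
      calc ∑ i, bA k A i ⊗ₜ[k] (∑ j, ∑ l, (bA k A).coord i (bA k A j * bA k A l) •
              (X k A B (j, x) * X k A B (l, y)))
          = ∑ i, ∑ j, ∑ l, (bA k A).coord i (bA k A j * bA k A l) •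
              (bA k A i ⊗ₜ[k] (X k A B (j, x) * X k A B (l, y))) := by
            simp [TensorProduct.tmul_sum, TensorProduct.tmul_smul]
        _ = ∑ j, ∑ l, ∑ i, (bA k A).coord i (bA k A j * bA k A l) •
              (bA k A i ⊗ₜ[k] (X k A B (j, x) * X k A B (l, y))) := by
            rw [Finset.sum_comm]
            exact Finset.sum_congr rfl fun j _ => Finset.sum_comm
        _ = ∑ j, ∑ l, (bA k A j ⊗ₜ[k] X k A B (j, x)) * (bA k A l ⊗ₜ[k] X k A B (l, y)) := by
            refine Finset.sum_congr rfl fun j _ => Finset.sum_congr rfl fun l _ => ?_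
            rw [Algebra.TensorProduct.tmul_mul_tmul]
            calc ∑ i, (bA k A).coord i (bA k A j * bA k A l) •                  (bA k A i ⊗ₜ[k] (X k A B (j, x) * X k A B (l, y)))
                = ∑ i, ((bA k A).coord i (bA k A j * bA k A l) • bA k A i) ⊗ₜ[k]
                    (X k A B (j, x) * X k A B (l, y)) := by
                  simp [TensorProduct.smul_tmul']
              _ = (bA k A j * bA k A l) ⊗ₜ[k] (X k A B (j, x) * X k A B (l, y)) := by
                  rw [← TensorProduct.sum_tmul]
                  congr 1
                  exact (bA k A).sum_repr _)

variable {k A B C}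

/-- lifting an algebra map `B →ₐ A ⊗ C` to `L →ₐ C` -/
def gAlg (h : B →ₐ[k] A ⊗[k] C) : L k A B →ₐ[k] C :=
  RingQuot.liftAlgHom k ⟨FreeAlgebra.lift k (fun p => proj k A C p.1 (h p.2)), by
    intro u v r
    induction r with
    | add i x y => simp
    | smul i c x => simp
    | one i => simp [Algebra.TensorProduct.one_def, Algebra.algebraMap_eq_smul_one]
    | mul i x y =>
        simp only [FreeAlgebra.lift_ι_apply, map_sum, map_smul, map_mul]
        conv_lhs => rw [← expand k A C (h x), ← expand k A C (h y)]
        rw [Finset.sum_mul_sum]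
        simp [Algebra.TensorProduct.tmul_mul_tmul]⟩

lemma gAlg_X (h : B →ₐ[k] A ⊗[k] C) (p) :
    gAlg h (X k A B p) = proj k A C p.1 (h p.2) := by
  simp [gAlg, X, RingQuot.liftAlgHom_mkAlgHom_apply]

lemma factorization (h : B →ₐ[k] A ⊗[k] C) :
    (Algebra.TensorProduct.map (AlgHom.id k A) (gAlg h)).comp (fAlg k A B) = h := by
  apply AlgHom.ext
  intro x
  have : fAlg k A B x = f₀ k A B x := rfl
  rw [AlgHom.comp_apply, this, f₀_apply, map_sum]
  simp only [Algebra.TensorProduct.map_tmul, AlgHom.coe_id, id_eq, gAlg_X]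
  exact expand k A C (h x)

end SweedlerAux

end Sweedler


noncomputable section PreservesLimitsPart

variable (k : Type) [Field k] (V : Type) [AddCommGroup V] [Module k V] [FiniteDimensional k V]

instance moduleCatExactPairing :
    ExactPairing (ModuleCat.of k V) (ModuleCat.of k (Module.Dual k V)) where
  coevaluation' := ModuleCat.ofHom (coevaluation k V)
  evaluation' := ModuleCat.ofHom (contractLeft k V)
  coevaluation_evaluation' := by
    ext : 1
    apply contractLeft_assoc_coevaluation k V
  evaluation_coevaluation' := by
    ext : 1
    apply contractLeft_assoc_coevaluation' k V

example : PreservesLimits (tensorLeft (ModuleCat.of k V)) :=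
  (tensorLeftAdjunction (ModuleCat.of k V) (ModuleCat.of k (Module.Dual k V))).rightAdjoint_preservesLimits

instance : PreservesLimits (tensorLeft (ModuleCat.of k V)) :=
  (tensorLeftAdjunction (ModuleCat.of k V)
    (ModuleCat.of k (Module.Dual k V))).rightAdjoint_preservesLimits

variable (A : Type) [Ring A] [Algebra k A] [FiniteDimensional k A]

def tensorForgetIso : tensorLeft (AlgCat.of k A) ⋙ forget₂ (AlgCat k) (ModuleCat k)
    ≅ forget₂ (AlgCat k) (ModuleCat k) ⋙ tensorLeft (ModuleCat.of k A) :=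
  NatIso.ofComponents (fun X => Iso.refl _) (by
    intro X Y f
    apply ModuleCat.hom_ext
    apply TensorProduct.ext'
    intro a x
    rfl)

instance : PreservesLimits (tensorLeft (AlgCat.of k A) ⋙ forget₂ (AlgCat k) (ModuleCat k)) :=
  preservesLimits_of_natIso (tensorForgetIso k A).symm

instance : PreservesLimits ((tensorLeft (AlgCat.of k A) ⋙ forget₂ (AlgCat k) (ModuleCat k)) ⋙ forget (ModuleCat k)) := inferInstance

instance : PreservesLimits (tensorLeft (AlgCat.of k A) ⋙ forget (AlgCat.{0} k)) :=
  preservesLimits_of_natIso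
    (Functor.associator _ _ _ ≪≫
      Functor.isoWhiskerLeft (tensorLeft (AlgCat.of k A))
        (eqToIso (HasForget₂.forget_comp (C := AlgCat.{0} k) (D := ModuleCat.{0} k))))

instance : ReflectsLimits (forget (AlgCat.{0} k)) :=
  reflectsLimits_of_reflectsIsomorphisms

instance : PreservesLimits (tensorLeft (AlgCat.of k A)) :=
  preservesLimits_of_reflects_of_preserves _ (forget (AlgCat.{0} k))


end PreservesLimitsPart

/-- For a finite dimensional algebra `A` over a field `k`, the functor
`A ⊗ - : Alg_k → Alg_k` has a left adjoint. -/
theorem tensorLeft_isRightAdjoint (k : Type) [Field k]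
    (A : Type) [Ring A] [Algebra k A] [FiniteDimensional k A] :
    (tensorLeft (AlgCat.of k A)).IsRightAdjoint := by
  apply isRightAdjoint_of_preservesLimits_of_solutionSetCondition
  intro B
  refine ⟨PUnit, fun _ => AlgCat.of k (SweedlerAux.L k A B),
    fun _ => AlgCat.ofHom (SweedlerAux.fAlg k A B), ?_⟩
  intro X h
  refine ⟨PUnit.unit, AlgCat.ofHom (SweedlerAux.gAlg (C := X) h.hom), ?_⟩
  apply AlgCat.hom_ext
  exact SweedlerAux.factorization (C := X) h.hom
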